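/- Let N ≥ 2 be an integer, define f_N(ω) := (1/N)·(√(ω(N−1)) + √(1−ω))² and g₋(p) := (1 + (N−2)p − 2√((N−1)·p·(1−p)))/N. Then for every ω ∈ [0, 1 − 1/N] and every p ∈ [1/N, 1]: p ≤ f_N(ω) if and only if g₋(p) ≤ ω. -/
import Mathlib


/-- `f_N(ω) = (1/N)(√(ω(N−1)) + √(1−ω))²`. -/
noncomputable def fsd (N : ℕ) (ω : ℝ) : ℝ :=
  (1 / (N : ℝ)) * (Real.sqrt (ω * ((N : ℝ) - 1)) + Real.sqrt (1 - ω)) ^ 2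

/-- `g₋(p) = (1 + (N−2)p − 2√((N−1)p(1−p)))/N`. -/
noncomputable def gMinus (N : ℕ) (p : ℝ) : ℝ :=
  (1 + ((N : ℝ) - 2) * p - 2 * Real.sqrt (((N : ℝ) - 1) * p * (1 - p))) / (N : ℝ)

private lemma key_fwd (k c U V X Y : ℝ) (hU : 0 ≤ U) (hV : 0 ≤ V) (hX : 0 ≤ X)
    (hY : 0 ≤ Y) (hc : 0 ≤ c) (hk : 0 ≤ k)
    (huv : U^2 + V^2 = 1) (hxy : X^2 + Y^2 = 1) (hc2 : c^2 = k^2 + 1)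
    (hkV : U ≤ k*V) (hkX : Y ≤ k*X)
    (h : c*X ≤ k*U + V) : k*X - Y ≤ c*U := by
  have hcX : 0 ≤ c*X := mul_nonneg hc hX
  have hcU : 0 ≤ c*U := mul_nonneg hc hU
  have hcY : 0 ≤ c*Y := mul_nonneg hc hY
  have hkVU : 0 ≤ k*V - U := by linarith
  have hkXY : 0 ≤ k*X - Y := by linarith
  have hidU : (k*U+V)^2 + (k*V-U)^2 = c^2 := by linear_combination (k^2+1)*huv - hc2
  have hidX : (k*Y+X)^2 + (k*X-Y)^2 = c^2 := by linear_combination (k^2+1)*hxy - hc2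
  have hidcX : (c*X)^2 + (c*Y)^2 = c^2 := by linear_combination c^2*hxy
  -- Step A : k*V - U ≤ c*Y
  have hsq1 : (c*X)^2 ≤ (k*U + V)^2 := pow_le_pow_left₀ hcX h 2
  have hsq2 : (k*V - U)^2 ≤ (c*Y)^2 := by linarith
  have hA : k*V - U ≤ c*Y := le_of_pow_le_pow_left₀ two_ne_zero hcY hsq2
  -- Step B : the "sine of angle difference" is nonnegative
  have t1 : Y*(c*X) ≤ Y*(k*U+V) := mul_le_mul_of_nonneg_left h hY
  have t2 : X*(k*V-U) ≤ X*(c*Y) := mul_le_mul_of_nonneg_left hA hX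
  have hE : 0 ≤ U*(k*Y+X) - V*(k*X-Y) := by
    have e : U*(k*Y+X) - V*(k*X-Y)
        = (Y*(k*U+V) - Y*(c*X)) + (X*(c*Y) - X*(k*V-U)) := by ring
    linarith [e.ge, e.le]
  -- Step C : conclude by contradiction
  by_contra hcon
  push_neg at hcon
  have h2 : (c*U)^2 < (k*X-Y)^2 := pow_lt_pow_left₀ hcon hcU two_ne_zero
  have h0 : 0 ≤ V*(k*X-Y) := mul_nonneg hV hkXY
  have hE' : V*(k*X-Y) ≤ U*(k*Y+X) := by linarith
  have hE2 : (V*(k*X-Y))^2 ≤ (U*(k*Y+X))^2 := pow_le_pow_left₀ h0 hE' 2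
  have key : V^2*(k*X-Y)^2 ≤ U^2*(k*Y+X)^2 := by
    rw [← mul_pow, ← mul_pow]; exact hE2
  have e1 : U^2*(k*Y+X)^2 = U^2*c^2 - U^2*(k*X-Y)^2 := by linear_combination U^2*hidX
  have e2 : V^2*(k*X-Y)^2 = (k*X-Y)^2 - U^2*(k*X-Y)^2 := by linear_combination (k*X-Y)^2*huv
  have e3 : (c*U)^2 = U^2*c^2 := by ring
  linarith

private lemma key_bwd (k c U V X Y : ℝ) (hU : 0 ≤ U) (hV : 0 ≤ V) (hX : 0 ≤ X)
    (hY : 0 ≤ Y) (hc : 0 ≤ c) (hk : 0 ≤ k)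
    (huv : U^2 + V^2 = 1) (hxy : X^2 + Y^2 = 1) (hc2 : c^2 = k^2 + 1)
    (hkV : U ≤ k*V) (hkX : Y ≤ k*X)
    (h : k*X - Y ≤ c*U) : c*X ≤ k*U + V := by
  have hcX : 0 ≤ c*X := mul_nonneg hc hX
  have hcU : 0 ≤ c*U := mul_nonneg hc hU
  have hcV : 0 ≤ c*V := mul_nonneg hc hV
  have hkVU : 0 ≤ k*V - U := by linarith
  have hkXY : 0 ≤ k*X - Y := by linarith
  have hkYX : 0 ≤ k*Y + X := by positivity
  have hkUV : 0 ≤ k*U + V := by positivity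
  have hidU : (k*U+V)^2 + (k*V-U)^2 = c^2 := by linear_combination (k^2+1)*huv - hc2
  have hidX : (k*Y+X)^2 + (k*X-Y)^2 = c^2 := by linear_combination (k^2+1)*hxy - hc2
  have hidcU : (c*U)^2 + (c*V)^2 = c^2 := by linear_combination c^2*huv
  -- Step A : c*V ≤ k*Y + X
  have hsq1 : (k*X - Y)^2 ≤ (c*U)^2 := pow_le_pow_left₀ hkXY h 2
  have hsq2 : (c*V)^2 ≤ (k*Y+X)^2 := by linarith
  have hA : c*V ≤ k*Y + X := le_of_pow_le_pow_left₀ two_ne_zero hkYX hsq2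
  -- Step B : the "sine of angle difference" is nonnegative
  have t1 : V*(k*X-Y) ≤ V*(c*U) := mul_le_mul_of_nonneg_left h hV
  have t2 : U*(c*V) ≤ U*(k*Y+X) := mul_le_mul_of_nonneg_left hA hU
  have hE : 0 ≤ Y*(k*U+V) - X*(k*V-U) := by
    have e : Y*(k*U+V) - X*(k*V-U)
        = (U*(k*Y+X) - U*(c*V)) + (V*(c*U) - V*(k*X-Y)) := by ring
    linarith [e.ge, e.le]
  -- Step C : conclude by contradiction
  by_contra hcon
  push_neg at hcon
  have h2 : (k*U+V)^2 < (c*X)^2 := pow_lt_pow_left₀ hcon hkUV two_ne_zero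
  have h0 : 0 ≤ X*(k*V-U) := mul_nonneg hX hkVU
  have hE' : X*(k*V-U) ≤ Y*(k*U+V) := by linarith
  have hE2 : (X*(k*V-U))^2 ≤ (Y*(k*U+V))^2 := pow_le_pow_left₀ h0 hE' 2
  have key : X^2*(k*V-U)^2 ≤ Y^2*(k*U+V)^2 := by
    rw [← mul_pow, ← mul_pow]; exact hE2
  have e1 : Y^2*(k*U+V)^2 = (k*U+V)^2 - X^2*(k*U+V)^2 := by linear_combination (k*U+V)^2*hxy
  have e2 : X^2*(k*V-U)^2 = X^2*c^2 - X^2*(k*U+V)^2 := by linear_combination X^2*hidU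
  have e3 : (c*X)^2 = X^2*c^2 := by ring
  linarith

set_option maxHeartbeats 1000000 in
theorem fsd_bound_iff_gMinus_bound (N : ℕ) (hN : 2 ≤ N) :
    ∀ ω ∈ Set.Icc (0 : ℝ) (1 - 1 / (N : ℝ)), ∀ p ∈ Set.Icc (1 / (N : ℝ)) 1,
      p ≤ fsd N ω ↔ gMinus N p ≤ ω := by
  intro ω hω p hp
  obtain ⟨hω0, hω1⟩ := hω
  obtain ⟨hp0, hp1⟩ := hp
  have hN2 : (2:ℝ) ≤ (N:ℝ) := by exact_mod_cast hN
  have hNpos : (0:ℝ) < N := by linarith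
  have hNinv : (0:ℝ) < 1/(N:ℝ) := by positivity
  have hp0' : (0:ℝ) ≤ p := le_trans (le_of_lt hNinv) hp0
  have h1p : (0:ℝ) ≤ 1 - p := by linarith
  have h1ω : (0:ℝ) ≤ 1 - ω := by
    have : 1 - 1/(N:ℝ) ≤ 1 := by linarith
    linarith
  have hNe : (N:ℝ) ≠ 0 := ne_of_gt hNpos
  have hNω : (N:ℝ)*ω ≤ (N:ℝ) - 1 := by
    have := mul_le_mul_of_nonneg_left hω1 (le_of_lt hNpos)
    rw [mul_sub, mul_one_div, div_self hNe] at this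
    linarith
  have hNp : (1:ℝ) ≤ (N:ℝ)*p := by
    have := mul_le_mul_of_nonneg_left hp0 (le_of_lt hNpos)
    rw [mul_one_div, div_self hNe] at this
    linarith
  set k := Real.sqrt ((N:ℝ) - 1) with hkdef
  set c := Real.sqrt (N:ℝ) with hcdef
  set U := Real.sqrt ω with hUdef
  set V := Real.sqrt (1 - ω) with hVdef
  set X := Real.sqrt p with hXdef
  set Y := Real.sqrt (1 - p) with hYdef
  have hk : 0 ≤ k := Real.sqrt_nonneg _
  have hc : 0 ≤ c := Real.sqrt_nonneg _
  have hU : 0 ≤ U := Real.sqrt_nonneg _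
  have hV : 0 ≤ V := Real.sqrt_nonneg _
  have hX : 0 ≤ X := Real.sqrt_nonneg _
  have hY : 0 ≤ Y := Real.sqrt_nonneg _
  have hk2 : k^2 = (N:ℝ) - 1 := Real.sq_sqrt (by linarith)
  have hc2 : c^2 = (N:ℝ) := Real.sq_sqrt (le_of_lt hNpos)
  have hU2 : U^2 = ω := Real.sq_sqrt hω0
  have hV2 : V^2 = 1 - ω := Real.sq_sqrt h1ω
  have hX2 : X^2 = p := Real.sq_sqrt hp0'
  have hY2 : Y^2 = 1 - p := Real.sq_sqrt h1p
  have huv : U^2 + V^2 = 1 := by rw [hU2, hV2]; ring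
  have hxy : X^2 + Y^2 = 1 := by rw [hX2, hY2]; ring
  have hc2' : c^2 = k^2 + 1 := by rw [hc2, hk2]; ring
  have hkV : U ≤ k*V := by
    have h' : U^2 ≤ (k*V)^2 := by
      rw [hU2, mul_pow, hk2, hV2]; nlinarith [hNω, hω0]
    exact le_of_pow_le_pow_left₀ two_ne_zero (mul_nonneg hk hV) h'
  have hkX : Y ≤ k*X := by
    have h' : Y^2 ≤ (k*X)^2 := by
      rw [hY2, mul_pow, hk2, hX2]; nlinarith [hNp, hp1]
    exact le_of_pow_le_pow_left₀ two_ne_zero (mul_nonneg hk hX) h'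
  -- rewrite fsd
  have hfsd : fsd N ω = (k*U + V)^2 / (N:ℝ) := by
    rw [fsd, Real.sqrt_mul hω0, ← hUdef, ← hkdef, ← hVdef]
    ring
  have hkUV : 0 ≤ k*U + V := by positivity
  have h1 : (p ≤ fsd N ω ↔ c*X ≤ k*U + V) := by
    rw [hfsd, le_div_iff₀ hNpos]
    have hcx : (c*X)^2 = p * (N:ℝ) := by rw [mul_pow, hc2, hX2]; ring
    constructor
    · intro h
      refine le_of_pow_le_pow_left₀ two_ne_zero hkUV ?_
      rw [hcx]; exact h
    · intro h
      rw [← hcx]; exact pow_le_pow_left₀ (mul_nonneg hc hX) h 2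
  -- rewrite gMinus
  have hsq : Real.sqrt (((N:ℝ)-1)*p*(1-p)) = k*X*Y := by
    rw [Real.sqrt_mul (mul_nonneg (by linarith : (0:ℝ) ≤ (N:ℝ)-1) hp0'),
      Real.sqrt_mul (by linarith : (0:ℝ) ≤ (N:ℝ)-1), ← hkdef, ← hXdef, ← hYdef]
  have hgm : gMinus N p = (k*X - Y)^2 / (N:ℝ) := by
    rw [gMinus, hsq]
    have e : (k*X - Y)^2 = 1 + ((N:ℝ)-2)*p - 2*(k*X*Y) := by
      linear_combination X^2*hk2 + ((N:ℝ)-1)*hX2 + hY2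
    rw [e]
  have hkXY : 0 ≤ k*X - Y := by linarith
  have h2 : (gMinus N p ≤ ω ↔ k*X - Y ≤ c*U) := by
    rw [hgm, div_le_iff₀ hNpos]
    have hcu : (c*U)^2 = ω * (N:ℝ) := by rw [mul_pow, hc2, hU2]; ring
    constructor
    · intro h
      refine le_of_pow_le_pow_left₀ two_ne_zero (mul_nonneg hc hU) ?_
      rw [hcu]; exact h
    · intro h
      rw [← hcu]; exact pow_le_pow_left₀ hkXY h 2
  rw [h1, h2]
  constructor
  · exact key_fwd k c U V X Y hU hV hX hY hc hk huv hxy hc2' hkV hkX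
  · exact key_bwd k c U V X Y hU hV hX hY hc hk huv hxy hc2' hkV hkX
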